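/- arXiv:1209.1683 — 2 statements merged into one kernel-verified Lean document; each statement's English description precedes it below -/
import Mathlib

section
/- Let f be a nonconstant meromorphic function on ℂ with infinitely many poles. For r > 0 write D_r = {z ∈ ℂ : |z| > r} ∪ {∞}, and let f⁻¹(D_r) ⊆ ℂ denote the union of the set of poles of f and {z : f is analytic at z and |f(z)| > r}. Suppose R₀ > 0 is such that every connected component of f⁻¹(D_{R₀}) is simply connected and is mapped bijectively onto D_{R₀} by f (with poles sent to ∞). Then for every r > R₀ and every R > 0, all but at most finitely many connected components of f⁻¹(D_r) are contained in {z : |z| > R}; that is, the set of connected components of f⁻¹(D_r) that are not contained in {z : |z| > R} is finite. -/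
/-!
Points of `f⁻¹(D_r)` can accumulate only at points `z` around which `|f| > R₀` on a punctured
neighbourhood (there `f` has a pole, or a limit of modulus `≥ r`), and such a `z` itself lies in
`f⁻¹(D_{R₀})`; so a neighbourhood of `z` lies in the component `U` of `f⁻¹(D_{R₀})` through `z`.
Injective holomorphic maps are open, so the branch of `f⁻¹` defined on `D_{R₀}` by `U` is continuous
and carries the connected set `{|c| > r}` onto a connected subset of `f⁻¹(D_r)` that contains every
point of `f⁻¹(D_r)` near `z`. Hence every point has a neighbourhood meeting only finitely many
components of `f⁻¹(D_r)`, and compactness of `{|z| ≤ R}` finishes the proof.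
-/

/-- The preimage under `f` of `D_r = {z : |z| > r} ∪ {∞}`:
the union of the set of poles of `f` (points where `f` is not analytic) and
the set of points where `f` is analytic and `|f z| > r`. -/
def preimageDisk (f : ℂ → ℂ) (r : ℝ) : Set ℂ :=
  {z : ℂ | ¬ AnalyticAt ℂ f z} ∪ {z : ℂ | AnalyticAt ℂ f z ∧ r < ‖f z‖}

/-- The extension of `f` to a map into the Riemann sphere `OnePoint ℂ`,
sending poles to `∞`. -/
noncomputable def sphereExtension (f : ℂ → ℂ) : ℂ → OnePoint ℂ :=
  fun z => open Classical in if AnalyticAt ℂ f z then (f z : OnePoint ℂ) else OnePoint.infty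

/-- The neighborhood `D_r = {z : |z| > r} ∪ {∞}` of `∞` on the Riemann sphere. -/
def sphereDisk (r : ℝ) : Set (OnePoint ℂ) :=
  insert OnePoint.infty ((fun w : ℂ => (w : OnePoint ℂ)) '' {w : ℂ | r < ‖w‖})

open Set Filter Topology

theorem isPreconnected_setOf_lt_norm {E : Type*} [NormedAddCommGroup E] [NormedSpace ℝ E]
    (hE : 1 < Module.rank ℝ E) (r : ℝ) : IsPreconnected {w : E | r < ‖w‖} := by
  rcases lt_or_ge r 0 with hr | hr
  · convert isPreconnected_univ (α := E)
    exact eq_univ_of_forall fun w => hr.trans_le (norm_nonneg w)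
  have polar : (fun p : ℝ × E => p.1 • p.2) '' (Ioi r ×ˢ Metric.sphere 0 1) =
      {w : E | r < ‖w‖} := by
    ext w
    constructor
    · rintro ⟨⟨s, u⟩, ⟨hs : r < s, hu⟩, rfl⟩
      simp_all [norm_smul, abs_of_pos (hr.trans_lt hs)]
    · intro (hw : r < ‖w‖)
      have hw0 : ‖w‖ ≠ 0 := (hr.trans_lt hw).ne'
      exact ⟨(‖w‖, ‖w‖⁻¹ • w), ⟨hw, by simp [norm_smul, hw0]⟩, by simp [smul_smul, hw0]⟩
  rw [← polar]
  exact (isPreconnected_Ioi.prod (isConnected_sphere hE 0 zero_le_one).isPreconnected).image _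
    (by fun_prop)

theorem IsCompact.finite_image_inter_of_forall_mem_nhds {X Y : Type*} [TopologicalSpace X]
    {K s : Set X} {g : X → Y} (hK : IsCompact K)
    (h : ∀ x ∈ K, ∃ N ∈ 𝓝 x, (g '' (s ∩ N)).Finite) : (g '' (s ∩ K)).Finite := by
  refine hK.induction_on (p := fun t => (g '' (s ∩ t)).Finite) (by simp)
    (fun t t' htt' ht' => ht'.subset (image_mono (inter_subset_inter_right _ htt')))
    (fun t t' ht ht' => by rw [inter_union_distrib_left, image_union]; exact ht.union ht')
    fun x hx => ?_
  obtain ⟨N, hN, hfin⟩ := h x hx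
  exact ⟨N, mem_nhdsWithin_of_mem_nhds hN, hfin⟩

theorem IsPreconnected.subsingleton_image_connectedComponentIn {X : Type*}
    [TopologicalSpace X] {A F : Set X} (hA : IsPreconnected A) (hAF : A ⊆ F) :
    (_root_.connectedComponentIn F '' A).Subsingleton := by
  rintro _ ⟨a, ha, rfl⟩ _ ⟨b, hb, rfl⟩
  exact connectedComponentIn_eq (hA.subset_connectedComponentIn ha hAF hb)

theorem MeromorphicAt.eventually_lt_norm_of_frequently {𝕜 E : Type*}
    [NontriviallyNormedField 𝕜] [NormedAddCommGroup E] [NormedSpace 𝕜 E] {f : 𝕜 → E} {x : 𝕜}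
    (hf : MeromorphicAt f x) {a b : ℝ} (hab : a < b) (h : ∃ᶠ y in 𝓝[≠] x, b < ‖f y‖) :
    ∀ᶠ y in 𝓝[≠] x, a < ‖f y‖ := by
  rcases lt_or_ge (meromorphicOrderAt f x) 0 with ho | ho
  · exact (tendsto_norm_atTop_iff_cobounded.2
      (tendsto_cobounded_of_meromorphicOrderAt_neg ho)).eventually_gt_atTop a
  · obtain ⟨c, hc⟩ := tendsto_nhds_of_meromorphicOrderAt_nonneg hf ho
    have hbc : b ≤ ‖c‖ := ge_of_tendsto_of_frequently hc.norm (h.mono fun _ => le_of_lt)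
    exact hc.norm.eventually (lt_mem_nhds (hab.trans_le hbc))

theorem AnalyticOnNhd.isOpen_image_of_injOn {f : ℂ → ℂ} {O : Set ℂ} (hf : AnalyticOnNhd ℂ f O)
    (hinj : InjOn f O) (hO : IsOpen O) : IsOpen (f '' O) := by
  refine isOpen_iff_mem_nhds.2 ?_
  rintro _ ⟨w, hw, rfl⟩
  rcases (hf w hw).eventually_constant_or_nhds_le_map_nhds with hconst | hle
  · have : ∀ᶠ v in 𝓝[≠] w, False := by
      filter_upwards [nhdsWithin_le_nhds (hconst.and (hO.mem_nhds hw)), self_mem_nhdsWithin]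
        with v hv hvw using hvw (hinj hv.2 hw hv.1)
    obtain ⟨_, ⟨⟩⟩ := this.exists
  · exact hle (image_mem_map (hO.mem_nhds hw))

theorem isPreconnected_inter_preimage_of_injOn {f : ℂ → ℂ} {V S : Set ℂ} (hV : IsOpen V)
    (hf : AnalyticOnNhd ℂ f V) (hinj : InjOn f V) (hS : IsPreconnected S) (hSV : S ⊆ f '' V) :
    IsPreconnected (V ∩ f ⁻¹' S) := by
  have hopen : IsOpenMap (V.domRestrict f) := fun O hO => by
    have hOV : Subtype.val '' O ⊆ V := Subtype.coe_image_subset V O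
    rw [domRestrict_eq, image_comp]
    exact (hf.mono hOV).isOpen_image_of_injOn (hinj.mono hOV) (hV.isOpenMap_subtype_val O hO)
  have := (hS.preimage_of_isOpenMap hinj.injective hopen (by rwa [range_domRestrict])).image _
    continuous_subtype_val.continuousOn
  rwa [domRestrict_eq, preimage_comp, Subtype.image_preimage_coe] at this

section preimageDisk

variable {f : ℂ → ℂ} {R r : ℝ} {U : Set ℂ} {w z : ℂ}

theorem sphereExtension_of_analyticAt (hw : AnalyticAt ℂ f w) : sphereExtension f w = f w :=
  if_pos hw

theorem sphereExtension_of_not_analyticAt (hw : ¬ AnalyticAt ℂ f w) :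
    sphereExtension f w = OnePoint.infty :=
  if_neg hw

theorem mem_preimageDisk_of_analyticAt (hw : AnalyticAt ℂ f w) :
    w ∈ preimageDisk f R ↔ R < ‖f w‖ := by
  simp [preimageDisk, hw]

theorem injOn_of_injOn_sphereExtension (h : InjOn (sphereExtension f) U) :
    InjOn f {w ∈ U | AnalyticAt ℂ f w} := by
  rintro v ⟨hvU, hv⟩ w ⟨hwU, hw⟩ hvw
  exact h hvU hwU (by rw [sphereExtension_of_analyticAt hv, sphereExtension_of_analyticAt hw, hvw])

theorem subset_image_of_surjOn_sphereExtension (h : SurjOn (sphereExtension f) U (sphereDisk R)) :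
    {c : ℂ | R < ‖c‖} ⊆ f '' {w ∈ U | AnalyticAt ℂ f w} := by
  intro c hc
  obtain ⟨w, hwU, hwc⟩ := h (mem_insert_of_mem _ (mem_image_of_mem _ hc))
  by_cases hw : AnalyticAt ℂ f w
  · rw [sphereExtension_of_analyticAt hw] at hwc
    exact ⟨w, ⟨hwU, hw⟩, OnePoint.coe_injective hwc⟩
  · rw [sphereExtension_of_not_analyticAt hw] at hwc
    exact absurd hwc (OnePoint.infty_ne_coe c)

theorem isOpen_setOf_mem_connectedComponentIn_preimageDisk_and_analyticAt (R : ℝ) (z : ℂ) :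
    IsOpen {w ∈ connectedComponentIn (preimageDisk f R) z | AnalyticAt ℂ f w} := by
  refine isOpen_iff_mem_nhds.2 fun w ⟨hwU, hw⟩ => ?_
  have hwR : R < ‖f w‖ := (mem_preimageDisk_of_analyticAt hw).1 (connectedComponentIn_subset _ _ hwU)
  have hnear : ∀ᶠ v in 𝓝 w, AnalyticAt ℂ f v ∧ R < ‖f v‖ :=
    hw.eventually_analyticAt.and (hw.continuousAt.norm.eventually (lt_mem_nhds hwR))
  have hU : connectedComponentIn (preimageDisk f R) z ∈ 𝓝 w := by
    rw [connectedComponentIn_eq hwU]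
    exact connectedComponentIn_mem_nhds
      (hnear.mono fun v hv => (mem_preimageDisk_of_analyticAt hv.1).2 hv.2)
  exact inter_mem hU (hnear.mono fun v hv => hv.1)

variable {R₀ : ℝ}

theorem exists_isPreconnected_subset_preimageDisk_of_frequently (hf : MeromorphicAt f z)
    (hr : R₀ < r) (hbij : ∀ z ∈ preimageDisk f R₀,
      BijOn (sphereExtension f) (connectedComponentIn (preimageDisk f R₀) z) (sphereDisk R₀))
    (hacc : ∃ᶠ w in 𝓝[≠] z, w ∈ preimageDisk f r) :
    ∃ A ⊆ preimageDisk f r, IsPreconnected A ∧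
      ∀ᶠ w in 𝓝[≠] z, w ∈ preimageDisk f r → w ∈ A := by
  have han : ∀ᶠ w in 𝓝[≠] z, AnalyticAt ℂ f w := hf.eventually_analyticAt
  have hbig : ∃ᶠ w in 𝓝[≠] z, r < ‖f w‖ :=
    (hacc.and_eventually han).mono fun w hw => (mem_preimageDisk_of_analyticAt hw.2).1 hw.1
  have hz : z ∈ preimageDisk f R₀ := by
    by_cases hza : AnalyticAt ℂ f z
    · refine (mem_preimageDisk_of_analyticAt hza).2 (hr.trans_le ?_)
      exact ge_of_tendsto_of_frequently hza.continuousAt.continuousWithinAt.tendsto.norm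
        (hbig.mono fun _ => le_of_lt)
    · exact Or.inl hza
  have hU : connectedComponentIn (preimageDisk f R₀) z ∈ 𝓝 z := by
    refine connectedComponentIn_mem_nhds ?_
    rw [← insert_eq_of_mem hz, insert_mem_nhds_iff]
    filter_upwards [han, hf.eventually_lt_norm_of_frequently hr hbig] with w hw hwR
    exact (mem_preimageDisk_of_analyticAt hw).2 hwR
  refine ⟨{w ∈ connectedComponentIn (preimageDisk f R₀) z | AnalyticAt ℂ f w} ∩
    f ⁻¹' {c | r < ‖c‖}, ?_, ?_, ?_⟩
  · rintro w ⟨⟨-, hw⟩, hwr⟩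
    exact (mem_preimageDisk_of_analyticAt hw).2 hwr
  · have hℂ : 1 < Module.rank ℝ ℂ := by
      rw [Complex.rank_real_complex]
      exact_mod_cast one_lt_two
    exact isPreconnected_inter_preimage_of_injOn
      (isOpen_setOf_mem_connectedComponentIn_preimageDisk_and_analyticAt R₀ z)
      (fun w hw => hw.2) (injOn_of_injOn_sphereExtension (hbij z hz).injOn)
      (isPreconnected_setOf_lt_norm hℂ r)
      fun c hc => subset_image_of_surjOn_sphereExtension (hbij z hz).surjOn (hr.trans hc)
  · filter_upwards [nhdsWithin_le_nhds hU, han] with w hwU hw hwP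
    exact ⟨⟨hwU, hw⟩, (mem_preimageDisk_of_analyticAt hw).1 hwP⟩

theorem exists_mem_nhds_finite_image_connectedComponentIn_preimageDisk (hf : MeromorphicAt f z)
    (hr : R₀ < r) (hbij : ∀ z ∈ preimageDisk f R₀,
      BijOn (sphereExtension f) (connectedComponentIn (preimageDisk f R₀) z) (sphereDisk R₀)) :
    ∃ N ∈ 𝓝 z, (connectedComponentIn (preimageDisk f r) '' (preimageDisk f r ∩ N)).Finite := by
  set P := preimageDisk f r
  obtain ⟨A, hAP, hA, hnear⟩ :
      ∃ A ⊆ P, IsPreconnected A ∧ ∀ᶠ w in 𝓝[≠] z, w ∈ P → w ∈ A := by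
    by_cases hacc : ∃ᶠ w in 𝓝[≠] z, w ∈ P
    · exact exists_isPreconnected_subset_preimageDisk_of_frequently hf hr hbij hacc
    · exact ⟨∅, empty_subset _, isPreconnected_empty,
        (not_frequently.1 hacc).mono fun w hw hwP => (hw hwP).elim⟩
  refine ⟨insert z {w | w ∈ P → w ∈ A}, insert_mem_nhds_iff.2 hnear, ?_⟩
  refine ((hA.subsingleton_image_connectedComponentIn hAP).finite.insert
    (connectedComponentIn P z)).subset ?_
  rintro _ ⟨w, ⟨hwP, rfl | hwA⟩, rfl⟩
  · exact mem_insert _ _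
  · exact mem_insert_of_mem _ (mem_image_of_mem _ (hwA hwP))

end preimageDisk

theorem all_but_finitely_many_components_far_general
    (f : ℂ → ℂ) (hf : MeromorphicOn f Set.univ)
    (R₀ : ℝ)
    (hcomp : ∀ z ∈ preimageDisk f R₀,
      SimplyConnectedSpace ↥(connectedComponentIn (preimageDisk f R₀) z) ∧
      Set.BijOn (sphereExtension f) (connectedComponentIn (preimageDisk f R₀) z)
        (sphereDisk R₀)) :
    ∀ r > R₀, ∀ R > 0,
      {C : Set ℂ | (∃ z ∈ preimageDisk f r, C = connectedComponentIn (preimageDisk f r) z) ∧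
        ¬ C ⊆ {z : ℂ | R < ‖z‖}}.Finite := by
  intro r hr R _
  have hfin := (isCompact_closedBall (0 : ℂ) R).finite_image_inter_of_forall_mem_nhds
    fun z _ => exists_mem_nhds_finite_image_connectedComponentIn_preimageDisk (hf z trivial) hr
      fun z hz => (hcomp z hz).2
  refine hfin.subset ?_
  rintro C ⟨⟨z, -, rfl⟩, hC⟩
  obtain ⟨t, ht, htR⟩ := not_subset.1 hC
  exact ⟨t, ⟨connectedComponentIn_subset _ _ ht, by simpa using htR⟩, (connectedComponentIn_eq ht).symm⟩

/-- Lemma 2.1: if `f` is a nonconstant meromorphic function on `ℂ` with infinitely many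
poles, `∞` is not a singular value of `f⁻¹` over `D_{R₀}` (every component of
`f⁻¹(D_{R₀})` is simply connected and mapped bijectively onto `D_{R₀}`), then for every
`r > R₀` and every `R > 0`, all but finitely many components of `f⁻¹(D_r)` lie in
`{z : |z| > R}`. -/
theorem all_but_finitely_many_components_far
    (f : ℂ → ℂ) (hf : MeromorphicOn f Set.univ)
    (hnc : ∃ a b : ℂ, f a ≠ f b)
    (hpoles : {z : ℂ | ¬ AnalyticAt ℂ f z}.Infinite)
    (R₀ : ℝ) (hR₀ : 0 < R₀)
    (hcomp : ∀ z ∈ preimageDisk f R₀,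
      SimplyConnectedSpace ↥(connectedComponentIn (preimageDisk f R₀) z) ∧
      Set.BijOn (sphereExtension f) (connectedComponentIn (preimageDisk f R₀) z)
        (sphereDisk R₀)) :
    ∀ r > R₀, ∀ R > 0,
      {C : Set ℂ | (∃ z ∈ preimageDisk f r, C = connectedComponentIn (preimageDisk f r) z) ∧
        ¬ C ⊆ {z : ℂ | R < ‖z‖}}.Finite :=
  all_but_finitely_many_components_far_general f hf R₀ hcomp
end

section
/- Let f : ℂ → ℂ be an entire function (differentiable on all of ℂ), let t > 0 be real, let p, q ≥ 1 be integers, put n = p + q, and let w ∈ ℂ with a = f^p(w) (the p-th iterate of f at w). Assume the spherical derivative (f^p)^×(w) is nonzero. Then, with sums taken in [0,∞] (using the convention 1/0 = ∞), one has ∑_{z : f^q(z) = w} ((f^q)^×(z))^{−t} ≤ ((f^p)^×(w))^t · ∑_{z : f^n(z) = a} ((f^n)^×(z))^{−t}. -/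
open scoped ENNReal

/-- The spherical derivative `h^×(z) = |h′(z)|·(1+|z|²)/(1+|h(z)|²)` of an entire
function `h` at `z`. -/
noncomputable def sphDeriv (h : ℂ → ℂ) (z : ℂ) : ℝ :=
  ‖deriv h z‖ * (1 + ‖z‖ ^ 2) / (1 + ‖h z‖ ^ 2)

/-- The Perron–Frobenius–Ruelle fiber sum `∑_{z : f^k(z) = b} ((f^k)^×(z))^{−t}`,
taken in `[0,∞]` with the convention `0^(−t) = ∞` for `t > 0`. -/
noncomputable def fiberSum (f : ℂ → ℂ) (k : ℕ) (t : ℝ) (b : ℂ) : ℝ≥0∞ :=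
  ∑' z : {z : ℂ // f^[k] z = b}, (ENNReal.ofReal (sphDeriv f^[k] z)) ^ (-t)

/-! The fiber of `w` under `f^q` lies in the fiber of `f^p(w)` under `f^(p+q)`, and on it
the chain rule `(f^(p+q))^×(z) = (f^p)^×(w) · (f^q)^×(z)` turns each term of the first fiber
sum into `((f^p)^×(w))^t` times the corresponding term of the second. -/

theorem ENNReal.rpow_neg_eq_rpow_mul_rpow_neg_mul {c : ℝ≥0∞} (hc0 : c ≠ 0) (hc : c ≠ ⊤)
    {x : ℝ≥0∞} (hx : x ≠ ⊤) (t : ℝ) : x ^ (-t) = c ^ t * (c * x) ^ (-t) := by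
  rw [ENNReal.mul_rpow_of_ne_top hc hx, ← mul_assoc, ← ENNReal.rpow_add _ _ hc0 hc,
    add_neg_cancel, ENNReal.rpow_zero, one_mul]

lemma sphDeriv_nonneg (h : ℂ → ℂ) (z : ℂ) : 0 ≤ sphDeriv h z := by
  unfold sphDeriv
  positivity

lemma sphDeriv_comp {g h : ℂ → ℂ} (hg : Differentiable ℂ g) (hh : Differentiable ℂ h)
    (z : ℂ) :
    sphDeriv (g ∘ h) z = sphDeriv g (h z) * sphDeriv h z := by
  unfold sphDeriv
  rw [deriv_comp z (hg _) (hh _), norm_mul, Function.comp_apply]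
  have : (1 : ℝ) + ‖h z‖ ^ 2 ≠ 0 := by positivity
  field_simp

lemma sphDeriv_iterate_add {f : ℂ → ℂ} (hf : Differentiable ℂ f) (p q : ℕ) (z : ℂ) :
    sphDeriv f^[p + q] z = sphDeriv f^[p] (f^[q] z) * sphDeriv f^[q] z := by
  rw [Function.iterate_add, sphDeriv_comp (hf.iterate p) (hf.iterate q)]

lemma ofReal_sphDeriv_iterate_rpow_neg {f : ℂ → ℂ} (hf : Differentiable ℂ f) (t : ℝ)
    (p q : ℕ) {z : ℂ} (hz : sphDeriv f^[p] (f^[q] z) ≠ 0) :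
    ENNReal.ofReal (sphDeriv f^[q] z) ^ (-t) =
      ENNReal.ofReal (sphDeriv f^[p] (f^[q] z)) ^ t *
        ENNReal.ofReal (sphDeriv f^[p + q] z) ^ (-t) := by
  rw [sphDeriv_iterate_add hf, ENNReal.ofReal_mul (sphDeriv_nonneg _ _)]
  refine ENNReal.rpow_neg_eq_rpow_mul_rpow_neg_mul ?_ ENNReal.ofReal_ne_top
    ENNReal.ofReal_ne_top t
  exact ENNReal.ofReal_ne_zero_iff.mpr ((sphDeriv_nonneg _ _).lt_of_ne' hz)

theorem fiberSum_le_mul_fiberSum_general (f : ℂ → ℂ) (hf : Differentiable ℂ f)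
    (t : ℝ) (p q n : ℕ) (hn : n = p + q)
    (w a : ℂ) (ha : a = f^[p] w) (hw : sphDeriv f^[p] w ≠ 0) :
    fiberSum f q t w ≤ (ENNReal.ofReal (sphDeriv f^[p] w)) ^ t * fiberSum f n t a := by
  subst hn ha
  have hfiber : {z | f^[q] z = w} ⊆ {z | f^[p + q] z = f^[p] w} := fun z (hz : f^[q] z = w) =>
    (Function.iterate_add_apply f p q z).trans (congrArg f^[p] hz)
  calc fiberSum f q t w
      = ∑' z : {z | f^[q] z = w}, ENNReal.ofReal (sphDeriv f^[p] w) ^ t *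
          ENNReal.ofReal (sphDeriv f^[p + q] z) ^ (-t) :=
        tsum_congr fun ⟨z, hz⟩ => by
          subst hz
          exact ofReal_sphDeriv_iterate_rpow_neg hf t p q hw
    _ = ENNReal.ofReal (sphDeriv f^[p] w) ^ t *
          ∑' z : {z | f^[q] z = w}, ENNReal.ofReal (sphDeriv f^[p + q] z) ^ (-t) :=
        ENNReal.tsum_mul_left
    _ ≤ _ := by
      gcongr
      exact ENNReal.tsum_mono_subtype
        (fun z => ENNReal.ofReal (sphDeriv f^[p + q] z) ^ (-t)) hfiber

/-- Inequality (3.9) of Lemma 3.5(ii), for entire `f`: if `n = p + q` and `a = f^p(w)`,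
then `∑_{f^q(z)=w} ((f^q)^×(z))^{−t} ≤ ((f^p)^×(w))^t · ∑_{f^n(z)=a} ((f^n)^×(z))^{−t}`. -/
theorem fiberSum_le_mul_fiberSum (f : ℂ → ℂ) (hf : Differentiable ℂ f)
    (t : ℝ) (ht : 0 < t) (p q n : ℕ) (hp : 1 ≤ p) (hq : 1 ≤ q) (hn : n = p + q)
    (w a : ℂ) (ha : a = f^[p] w) (hw : sphDeriv f^[p] w ≠ 0) :
    fiberSum f q t w ≤ (ENNReal.ofReal (sphDeriv f^[p] w)) ^ t * fiberSum f n t a :=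
  fiberSum_le_mul_fiberSum_general f hf t p q n hn w a ha hw
end
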